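/- Let H be a real inner product space (e.g. ℝ^n), and let l_m : H → ℝ and l_s : H → ℝ be everywhere differentiable functions such that l_m is convex and its gradient is β-Lipschitz for some β > 0, and such that ‖∇l_m(θ)‖ ≤ G and ‖∇l_s(θ)‖ ≤ G for all θ, where 0 < G < 2. Let ε > 0 and set the learning rate η = ε / (β G). Then for every parameter vector θ satisfying ⟨∇l_m(θ), ∇l_s(θ)⟩ > ε, one step of gradient descent on the self-supervised loss strictly decreases the main loss: l_m(θ − η ∇l_s(θ)) < l_m(θ). -/

import Mathlib

/-! By the descent lemma for a `β`-smooth function,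
`l_m(θ - η d) ≤ l_m(θ) - η ⟪∇l_m(θ), d⟫ + β η² ‖d‖² / 2`. Since `β η G = ε`, for `d = ∇l_s(θ)`
the quadratic term is at most `η ε G / 2 < η ε < η ⟪∇l_m(θ), d⟫`. -/

open scoped RealInnerProductSpace NNReal

section

variable {H : Type*} [NormedAddCommGroup H] [InnerProductSpace ℝ H]

lemma LipschitzWith.inner_sub_le {K : ℝ≥0} {g : H → H} (hg : LipschitzWith K g) (x y v : H) :
    ⟪g y - g x, v⟫ ≤ K * ‖y - x‖ * ‖v‖ :=
  calc ⟪g y - g x, v⟫ ≤ ‖g y - g x‖ * ‖v‖ := real_inner_le_norm _ _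
    _ ≤ K * ‖y - x‖ * ‖v‖ := by
      gcongr
      simpa only [dist_eq_norm] using hg.dist_le_mul y x

variable [CompleteSpace H]

lemma HasGradientAt.hasDerivAt_comp_add_smul {f : H → ℝ} {f' x v : H} {t : ℝ}
    (hf : HasGradientAt f f' (x + t • v)) :
    HasDerivAt (fun s : ℝ => f (x + s • v)) ⟪f', v⟫ t := by
  have hline : HasDerivAt (fun s : ℝ => x + s • v) v t := by
    simpa using ((hasDerivAt_id t).smul_const v).const_add x
  exact hf.hasFDerivAt.comp_hasDerivAt t hline

lemma le_add_inner_add_of_lipschitzWith_gradient {f : H → ℝ} {g : H → H} {K : ℝ≥0}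
    (hf : ∀ x, HasGradientAt f (g x) x) (hg : LipschitzWith K g) (x v : H) :
    f (x + v) ≤ f x + ⟪g x, v⟫ + K / 2 * ‖v‖ ^ 2 := by
  have hφ : ∀ t : ℝ, HasDerivAt (fun s : ℝ => f (x + s • v)) ⟪g (x + t • v), v⟫ t :=
    fun t => (hf _).hasDerivAt_comp_add_smul
  have hB : ∀ t : ℝ, HasDerivAt (fun s : ℝ => f x + s * ⟪g x, v⟫ + K / 2 * s ^ 2 * ‖v‖ ^ 2)
      (⟪g x, v⟫ + K * t * ‖v‖ ^ 2) t := fun t =>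
    ((((hasDerivAt_id t).mul_const ⟪g x, v⟫).const_add (f x)).add
      (((hasDerivAt_pow 2 t).const_mul ((K : ℝ) / 2)).mul_const (‖v‖ ^ 2))).congr_deriv
      (by simp only [one_mul]; ring)
  have hslope : ∀ t ∈ Set.Ico (0 : ℝ) 1, ⟪g (x + t • v), v⟫ ≤ ⟪g x, v⟫ + K * t * ‖v‖ ^ 2 := by
    intro t ht
    have := hg.inner_sub_le x (x + t • v) v
    rw [add_sub_cancel_left, norm_smul, Real.norm_of_nonneg ht.1, inner_sub_left] at this
    linarith
  have := image_le_of_deriv_right_le_deriv_boundary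
    (fun t _ => (hφ t).continuousAt.continuousWithinAt)
    (fun t _ => (hφ t).hasDerivWithinAt) (by simp)
    (fun t _ => (hB t).continuousAt.continuousWithinAt)
    (fun t _ => (hB t).hasDerivWithinAt) hslope (Set.right_mem_Icc.mpr zero_le_one)
  simpa using this

lemma apply_sub_smul_lt_of_inner_gt {f : H → ℝ} {g : H → H} {K : ℝ≥0}
    (hf : ∀ x, HasGradientAt f (g x) x) (hg : LipschitzWith K g) {η : ℝ} (hη : 0 < η)
    (x d : H) (hd : K / 2 * η * ‖d‖ ^ 2 < ⟪g x, d⟫) :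
    f (x - η • d) < f x := by
  have h := le_add_inner_add_of_lipschitzWith_gradient hf hg x (-(η • d))
  rw [← sub_eq_add_neg, inner_neg_right, real_inner_smul_right, norm_neg, norm_smul,
    Real.norm_of_nonneg hη.le] at h
  nlinarith [mul_lt_mul_of_pos_left hd hη]

end

theorem lethean_stmt1_general
    {H : Type*} [NormedAddCommGroup H] [InnerProductSpace ℝ H] [CompleteSpace H]
    (lm : H → ℝ) (gm gs : H → H)
    (hgm : ∀ θ : H, HasGradientAt lm (gm θ) θ)
    (β : ℝ) (hβ : 0 < β)
    (hlip : LipschitzWith β.toNNReal gm)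
    (G : ℝ) (hG : 0 < G) (hG2 : G < 2)
    (hbs : ∀ θ : H, ‖gs θ‖ ≤ G)
    (ε : ℝ) (hε : 0 < ε)
    (η : ℝ) (hη : η = ε / (β * G)) :
    ∀ θ : H, ε < ⟪gm θ, gs θ⟫ → lm (θ - η • gs θ) < lm θ := by
  intro θ hcorr
  have hηpos : 0 < η := by rw [hη]; positivity
  have hpenalty : β / 2 * η * ‖gs θ‖ ^ 2 < ε :=
    calc β / 2 * η * ‖gs θ‖ ^ 2 ≤ β / 2 * η * G ^ 2 := by
          gcongr
          exact hbs θ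
      _ = ε * (G / 2) := by rw [hη]; field_simp
      _ < ε := mul_lt_of_lt_one_right hε (by linarith)
  refine apply_sub_smul_lt_of_inner_gt hgm hlip hηpos θ (gs θ) ?_
  rw [Real.coe_toNNReal _ hβ.le]
  linarith

/-- Theorem 1 exactly as stated in the paper, with learning rate η = ε/(βG) and
the additional hypothesis G < 2: if the main and self-supervised gradients are
positively correlated (inner product > ε), one step of gradient descent on the
self-supervised loss strictly decreases the main loss. -/
theorem lethean_stmt1
    {H : Type*} [NormedAddCommGroup H] [InnerProductSpace ℝ H] [CompleteSpace H]
    (lm ls : H → ℝ) (gm gs : H → H)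
    (hgm : ∀ θ : H, HasGradientAt lm (gm θ) θ)
    (hgs : ∀ θ : H, HasGradientAt ls (gs θ) θ)
    (hconv : ConvexOn ℝ Set.univ lm)
    (β : ℝ) (hβ : 0 < β)
    (hlip : LipschitzWith β.toNNReal gm)
    (G : ℝ) (hG : 0 < G) (hG2 : G < 2)
    (hbm : ∀ θ : H, ‖gm θ‖ ≤ G)
    (hbs : ∀ θ : H, ‖gs θ‖ ≤ G)
    (ε : ℝ) (hε : 0 < ε)
    (η : ℝ) (hη : η = ε / (β * G)) :
    ∀ θ : H, ε < ⟪gm θ, gs θ⟫ → lm (θ - η • gs θ) < lm θ :=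
  lethean_stmt1_general lm gm gs hgm β hβ hlip G hG hG2 hbs ε hε η hη
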